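/- Let Ext₁ : {0,1}^n × {0,1}^d → {0,1}^m be a (k₁, ε₁) seeded extractor and Ext₂ : {0,1}^n × {0,1}^m → {0,1}^{m₂} a strong (k₂, ε₂) seeded extractor. Let Y be an (n, 2k₁)-source and X an independent (n, k₂)-source. For i = 0, 1, …, 2^d − 1 let r_i ∈ {0,1}^d be the binary expression of i and let Z_i = Ext₂(X, Ext₁(Y, r_i)). Then with probability at least 1 − 2^{−k₁} over y ← Y there exists a subset S ⊆ {0, 1, …, 2^d − 1} with |S| ≥ (1 − √ε₂ − ε₁)·2^d such that for every i ∈ S, |Ext₂(X, Ext₁(y, r_i)) − U_{m₂}| ≤ √ε₂. -/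

import Mathlib

open Finset

abbrev BitStr (n : ℕ) := Fin n → Bool

/-- `p` is a probability distribution on the finite type `α`. -/
def IsProb {α : Type*} [Fintype α] (p : α → ℝ) : Prop :=
  (∀ a, 0 ≤ p a) ∧ ∑ a, p a = 1

/-- Statistical distance: `max_{T ⊆ α} |p(T) − q(T)|`. -/
noncomputable def statDist {α : Type*} [Fintype α] (p q : α → ℝ) : ℝ :=
  ⨆ T : Finset α, |∑ a ∈ T, p a - ∑ a ∈ T, q a|

/-- `H_∞(p) ≥ k`, i.e. every point has probability at most `2^(-k)`. -/
def IsKSource {α : Type*} [Fintype α] (p : α → ℝ) (k : ℝ) : Prop :=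
  ∀ a, p a ≤ (2 : ℝ) ^ (-k)

/-- The uniform distribution on a finite type. -/
noncomputable def unif (α : Type*) [Fintype α] : α → ℝ := fun _ => (Fintype.card α : ℝ)⁻¹


/-- `Ext` is a `(k, ε)` seeded extractor. -/
def IsSeededExtractor {n d m : ℕ} (Ext : BitStr n → BitStr d → BitStr m)
    (k ε : ℝ) : Prop :=
  ∀ p : BitStr n → ℝ, IsProb p → IsKSource p k →
    statDist
      (fun v : BitStr m =>
        ∑ x : BitStr n, ∑ r : BitStr d,
          if Ext x r = v then p x * unif (BitStr d) r else 0)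
      (unif (BitStr m)) ≤ ε

/-- `Ext` is a strong `(k, ε)` seeded extractor: the output is `ε`-close to uniform
even jointly with the seed. -/
def IsStrongSeededExtractor {n d m : ℕ} (Ext : BitStr n → BitStr d → BitStr m)
    (k ε : ℝ) : Prop :=
  ∀ p : BitStr n → ℝ, IsProb p → IsKSource p k →
    statDist
      (fun z : BitStr m × BitStr d =>
        (∑ x : BitStr n, if Ext x z.2 = z.1 then p x else 0) * unif (BitStr d) z.2)
      (fun z => unif (BitStr m) z.1 * unif (BitStr d) z.2) ≤ ε

open Classical in
/-- The probability that a sample from `p` satisfies `P`. -/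
noncomputable def probOf {α : Type*} [Fintype α] (p : α → ℝ) (P : α → Prop) : ℝ :=
  ∑ a, if P a then p a else 0

/-! The strong extractor makes the rows `w ↦ Ext₂(X, w)` `ε₂`-close to uniform on average over
`w`, so by Markov's inequality the set `B` of rows farther than `√ε₂` from uniform has density
at most `√ε₂`. Call `y` bad if more than a `√ε₂ + ε₁` fraction of the seeds `r` send `Ext₁(y, r)`
into `B`. If the bad `y` had probability more than `2^{-k₁}`, then `Y` conditioned on being bad
would still be a `k₁`-source, and `Ext₁` applied to it would hit `B` with probability more than
`density B + ε₁`, contradicting that `Ext₁` is a `(k₁, ε₁)` extractor. For a good `y`, the seeds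
avoiding `B` form the required set `S`. -/

section StatDist

variable {α : Type*} [Fintype α]

lemma le_statDist (p q : α → ℝ) (T : Finset α) :
    |∑ a ∈ T, p a - ∑ a ∈ T, q a| ≤ statDist p q :=
  le_ciSup (f := fun T : Finset α => |∑ a ∈ T, p a - ∑ a ∈ T, q a|)
    (Set.finite_range _).bddAbove T

lemma statDist_nonneg (p q : α → ℝ) : 0 ≤ statDist p q := by
  simpa using le_statDist p q ∅

lemma statDist_le {p q : α → ℝ} {c : ℝ}
    (h : ∀ T : Finset α, |∑ a ∈ T, p a - ∑ a ∈ T, q a| ≤ c) : statDist p q ≤ c :=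
  ciSup_le h

lemma statDist_eq_sum_max {p q : α → ℝ} (h : ∑ a, p a = ∑ a, q a) :
    statDist p q = ∑ a, max (p a - q a) 0 := by
  classical
  set D := ∑ a, max (p a - q a) 0
  have sum_sub_le : ∀ T : Finset α, ∑ a ∈ T, p a - ∑ a ∈ T, q a ≤ D := fun T =>
    calc ∑ a ∈ T, p a - ∑ a ∈ T, q a
        = ∑ a ∈ T, (p a - q a) := (sum_sub_distrib _ _).symm
      _ ≤ ∑ a ∈ T, max (p a - q a) 0 := sum_le_sum fun a _ => le_max_left _ _
      _ ≤ D := sum_le_sum_of_subset_of_nonneg (subset_univ T) fun a _ _ => le_max_right _ _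
  apply le_antisymm
  · refine statDist_le fun T => abs_sub_le_iff.2 ⟨sum_sub_le T, ?_⟩
    -- the deficit on `T` is the excess on `Tᶜ`, since both functions have the same total
    linarith [sum_sub_le Tᶜ, sum_add_sum_compl T p, sum_add_sum_compl T q]
  · have hD : D = ∑ a ∈ univ.filter (fun a => q a < p a), p a
        - ∑ a ∈ univ.filter (fun a => q a < p a), q a := by
      rw [← sum_sub_distrib, sum_filter]
      refine sum_congr rfl fun a _ => ?_
      split_ifs with hqp
      · exact max_eq_left (sub_nonneg.2 hqp.le)
      · exact max_eq_right (sub_nonpos.2 (not_lt.1 hqp))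
    exact hD ▸ (le_abs_self _).trans (le_statDist p q _)

lemma statDist_mul_right {β : Type*} [Fintype β] (q : β → α → ℝ) (ν : α → ℝ) (μ : β → ℝ)
    (hμ : ∀ b, 0 ≤ μ b) (hq : ∀ b, ∑ a, q b a = ∑ a, ν a) :
    statDist (fun z : α × β => q z.2 z.1 * μ z.2) (fun z => ν z.1 * μ z.2)
      = ∑ b, μ b * statDist (q b) ν := by
  have htotal : ∑ z : α × β, q z.2 z.1 * μ z.2 = ∑ z : α × β, ν z.1 * μ z.2 := by
    simp only [Fintype.sum_prod_type_right, ← sum_mul, hq]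
  rw [statDist_eq_sum_max htotal, Fintype.sum_prod_type_right]
  refine sum_congr rfl fun b _ => ?_
  rw [statDist_eq_sum_max (hq b), mul_sum]
  refine sum_congr rfl fun a _ => ?_
  rw [mul_comm (μ b), max_mul_of_nonneg _ _ (hμ b), sub_mul, zero_mul]

end StatDist

lemma unif_bitStr (ℓ : ℕ) (w : BitStr ℓ) : unif (BitStr ℓ) w = ((2 : ℝ) ^ ℓ)⁻¹ := by
  simp [unif]

lemma sum_unif (α : Type*) [Fintype α] [Nonempty α] : ∑ a, unif α a = 1 := by
  simp [unif]

lemma card_filter_lt_le_of_sum_le {α : Type*} [Fintype α] {f : α → ℝ} {s c : ℝ}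
    (hf : ∀ a, 0 ≤ f a) (hs : 0 ≤ s) (hc : 0 ≤ c) (h : ∑ a, f a ≤ s * c) :
    (#(univ.filter fun a => s < f a) : ℝ) ≤ c := by
  set B := univ.filter fun a => s < f a
  rcases B.eq_empty_or_nonempty with hB | hB
  · rwa [hB, card_empty, Nat.cast_zero]
  refine le_of_lt (lt_of_mul_lt_mul_left ?_ hs)
  calc s * #B = ∑ _a ∈ B, s := by rw [sum_const, nsmul_eq_mul, mul_comm]
    _ < ∑ a ∈ B, f a := sum_lt_sum_of_nonempty hB fun a ha => (mem_filter.1 ha).2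
    _ ≤ ∑ a, f a := sum_le_sum_of_subset_of_nonneg (subset_univ B) fun a _ _ => hf a
    _ ≤ s * c := h

lemma le_card_filter_not {α : Type*} [Fintype α] (P : α → Prop) [DecidablePred P] {c : ℝ}
    (h : (#(univ.filter P) : ℝ) ≤ c) : Fintype.card α - c ≤ #(univ.filter fun a => ¬ P a) := by
  have hsplit : (#(univ.filter P) : ℝ) + #(univ.filter fun a => ¬ P a) = Fintype.card α := by
    exact_mod_cast card_filter_add_card_filter_not (s := univ) P
  linarith

lemma IsProb.lt_sum_mul {α : Type*} [Fintype α] {p f : α → ℝ} {t : ℝ} (hp : IsProb p)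
    (h : ∀ a, p a ≠ 0 → t < f a) : t < ∑ a, p a * f a := by
  obtain ⟨a₀, ha₀⟩ : ∃ a, p a ≠ 0 := by
    by_contra! hzero
    simpa [hzero] using hp.2
  calc t = ∑ a, p a * t := by rw [← sum_mul, hp.2, one_mul]
    _ < ∑ a, p a * f a := by
      refine sum_lt_sum (fun a _ => ?_) ⟨a₀, mem_univ a₀, ?_⟩
      · rcases (hp.1 a).eq_or_lt with h0 | hpos
        · rw [← h0, zero_mul, zero_mul]
        · exact (mul_lt_mul_iff_right₀ hpos).2 (h a hpos.ne') |>.le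
      · exact (mul_lt_mul_iff_right₀ ((hp.1 a₀).lt_of_ne' ha₀)).2 (h a₀ ha₀)

section Pushforward

variable {α β : Type*} [Fintype α] [Fintype β] [DecidableEq β]

def pushforward (f : α → β) (p : α → ℝ) : β → ℝ :=
  fun b => ∑ a, if f a = b then p a else 0

lemma sum_pushforward (f : α → β) (p : α → ℝ) : ∑ b, pushforward f p b = ∑ a, p a := by
  unfold pushforward
  rw [sum_comm]
  simp

end Pushforward

section Conditioning

variable {α : Type*} [Fintype α]

lemma probOf_mono {p : α → ℝ} (hp : ∀ a, 0 ≤ p a) {P Q : α → Prop} (h : ∀ a, P a → Q a) :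
    probOf p P ≤ probOf p Q := by
  classical
  refine sum_le_sum fun a _ => ?_
  by_cases hP : P a
  · simp [hP, h a hP]
  · split_ifs <;> simp [hp a]

lemma probOf_add_probOf_not {p : α → ℝ} (hp : IsProb p) (P : α → Prop) :
    probOf p P + probOf p (fun a => ¬ P a) = 1 := by
  classical
  rw [probOf, probOf, ← sum_add_distrib, ← hp.2]
  refine sum_congr rfl fun a _ => ?_
  by_cases h : P a <;> simp [h]

open Classical in
noncomputable def condDist (p : α → ℝ) (P : α → Prop) : α → ℝ :=
  fun a => if P a then p a / probOf p P else 0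

lemma condDist_ne_zero {p : α → ℝ} {P : α → Prop} {a : α} (h : condDist p P a ≠ 0) : P a := by
  by_contra hP
  simp [condDist, hP] at h

lemma isProb_condDist {p : α → ℝ} (hp : ∀ a, 0 ≤ p a) {P : α → Prop} (hP : 0 < probOf p P) :
    IsProb (condDist p P) := by
  classical
  refine ⟨fun a => ?_, ?_⟩
  · unfold condDist
    split_ifs
    exacts [div_nonneg (hp a) hP.le, le_rfl]
  · calc ∑ a, condDist p P a = (∑ a, if P a then p a else 0) / probOf p P := by
          rw [sum_div]
          refine sum_congr rfl fun a _ => ?_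
          by_cases hPa : P a <;> simp [condDist, hPa]
      _ = 1 := div_self hP.ne'

lemma isKSource_condDist {p : α → ℝ} {P : α → Prop} {k a : ℝ} (hk : IsKSource p (k + a))
    (hP : (2 : ℝ) ^ (-a) ≤ probOf p P) : IsKSource (condDist p P) k := by
  intro x
  have h2a : (0 : ℝ) < 2 ^ (-a) := by positivity
  unfold condDist
  split_ifs
  · calc p x / probOf p P ≤ 2 ^ (-(k + a)) / 2 ^ (-a) :=
          div_le_div₀ (by positivity) (hk x) h2a hP
      _ = 2 ^ (-k) := by rw [← Real.rpow_sub two_pos]; ring_nf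
  · positivity

end Conditioning

section Extractors

variable {n d m : ℕ} {k ε : ℝ}

lemma IsSeededExtractor.sum_mul_card_hits_le {Ext : BitStr n → BitStr d → BitStr m}
    (h : IsSeededExtractor Ext k ε) {p : BitStr n → ℝ} (hp : IsProb p) (hk : IsKSource p k)
    (B : Finset (BitStr m)) :
    ∑ x, p x * (#(univ.filter fun r => Ext x r ∈ B) / 2 ^ d) ≤ #B / 2 ^ m + ε := by
  have hclose := (le_abs_self _).trans ((le_statDist _ _ B).trans (h p hp hk))
  have hout : ∑ v ∈ B, ∑ x, ∑ r : BitStr d,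
      (if Ext x r = v then p x * unif (BitStr d) r else 0)
        = ∑ x, p x * (#(univ.filter fun r => Ext x r ∈ B) / 2 ^ d) := by
    rw [sum_comm]
    refine sum_congr rfl fun x _ => ?_
    rw [sum_comm]
    simp only [sum_ite_eq]
    rw [← sum_filter]
    simp only [unif_bitStr, sum_const, nsmul_eq_mul]
    ring
  have hunif : ∑ v ∈ B, unif (BitStr m) v = #B / 2 ^ m := by
    simp [unif_bitStr, div_eq_mul_inv]
  linarith

lemma IsSeededExtractor.probOf_many_hits_le {Ext : BitStr n → BitStr d → BitStr m}
    (h : IsSeededExtractor Ext k ε) {p : BitStr n → ℝ} (hp : IsProb p) {a : ℝ}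
    (hk : IsKSource p (k + a)) (B : Finset (BitStr m)) {t : ℝ} (ht : #B / 2 ^ m + ε ≤ t) :
    probOf p (fun x => t * 2 ^ d < #(univ.filter fun r => Ext x r ∈ B)) ≤ 2 ^ (-a) := by
  set P : BitStr n → Prop := fun x => t * 2 ^ d < (#(univ.filter fun r => Ext x r ∈ B) : ℝ)
  by_contra! hmany
  have h2a : (0 : ℝ) < 2 ^ (-a) := by positivity
  have hcond := isProb_condDist hp.1 (h2a.trans hmany)
  have hhits := h.sum_mul_card_hits_le hcond (isKSource_condDist hk hmany.le) B
  -- on the conditioned distribution, every point hits `B` with a fraction of seeds above `t`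
  have hlt := hcond.lt_sum_mul (f := fun x => #(univ.filter fun r => Ext x r ∈ B) / 2 ^ d)
    (t := t) fun x hx => (lt_div_iff₀ (by positivity)).2 (condDist_ne_zero (P := P) hx)
  linarith

lemma IsStrongSeededExtractor.sum_statDist_le {Ext : BitStr n → BitStr d → BitStr m}
    (h : IsStrongSeededExtractor Ext k ε) {p : BitStr n → ℝ} (hp : IsProb p)
    (hk : IsKSource p k) :
    ∑ w, statDist (pushforward (Ext · w) p) (unif (BitStr m)) ≤ ε * 2 ^ d := by
  have havg : ∑ w, unif (BitStr d) w * statDist (pushforward (Ext · w) p) (unif (BitStr m)) ≤ ε :=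
    (statDist_mul_right (fun w => pushforward (Ext · w) p) _ _ (fun w => by simp [unif])
      fun w => by rw [sum_pushforward, hp.2, sum_unif]).symm.trans_le (h p hp hk)
  simp only [unif_bitStr, ← mul_sum] at havg
  exact (inv_mul_le_iff₀ (by positivity)).1 havg |>.trans_eq (mul_comm _ _)

end Extractors

/-- Let `Ext₁` be a `(k₁,ε₁)` seeded extractor and `Ext₂` a strong
`(k₂,ε₂)` seeded extractor, `Y` an `(n,2k₁)`-source and `X` an independent
`(n,k₂)`-source. Then with probability at least `1 − 2^{−k₁}` over `y ← Y` there is a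
set `S` of seeds of `Ext₁` of size at least `(1 − √ε₂ − ε₁)·2^d` such that for every
`r ∈ S` the distribution `Ext₂(X, Ext₁(y, r))` is `√ε₂`-close to uniform. -/
theorem sampled_rows_close_to_uniform {n d m m₂ : ℕ}
    (Ext₁ : BitStr n → BitStr d → BitStr m) (Ext₂ : BitStr n → BitStr m → BitStr m₂)
    (k₁ k₂ ε₁ ε₂ : ℝ)
    (h1 : IsSeededExtractor Ext₁ k₁ ε₁) (h2 : IsStrongSeededExtractor Ext₂ k₂ ε₂)
    (pX pY : BitStr n → ℝ) (hpX : IsProb pX) (hpY : IsProb pY)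
    (hY : IsKSource pY (2 * k₁)) (hX : IsKSource pX k₂) :
    1 - (2 : ℝ) ^ (-k₁) ≤
      probOf pY (fun y =>
        ∃ S : Finset (BitStr d),
          (1 - Real.sqrt ε₂ - ε₁) * 2 ^ d ≤ (S.card : ℝ) ∧
          ∀ r ∈ S,
            statDist
              (fun v : BitStr m₂ =>
                ∑ x : BitStr n, if Ext₂ x (Ext₁ y r) = v then pX x else 0)
              (unif (BitStr m₂)) ≤ Real.sqrt ε₂) := by
  set s := Real.sqrt ε₂
  have hε₂ : 0 ≤ ε₂ := (statDist_nonneg _ _).trans (h2 pX hpX hX)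
  set B := univ.filter fun w => s < statDist (pushforward (Ext₂ · w) pX) (unif (BitStr m₂))
  have hB : (#B : ℝ) ≤ s * 2 ^ m :=
    card_filter_lt_le_of_sum_le (fun w => statDist_nonneg _ _) (Real.sqrt_nonneg ε₂)
      (by positivity)
      (by rw [← mul_assoc, Real.mul_self_sqrt hε₂]; exact h2.sum_statDist_le hpX hX)
  have hbad := h1.probOf_many_hits_le hpY (two_mul k₁ ▸ hY) B (t := s + ε₁)
    (by linarith [(div_le_iff₀ (by positivity : (0 : ℝ) < 2 ^ m)).2 hB])
  have hcompl := probOf_add_probOf_not hpY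
    fun y => (s + ε₁) * 2 ^ d < #(univ.filter fun r => Ext₁ y r ∈ B)
  refine le_trans (by linarith) (probOf_mono hpY.1 fun y hy => ⟨univ.filter fun r => Ext₁ y r ∉ B,
    ?_, fun r hr => ?_⟩)
  · have hS := le_card_filter_not (fun r => Ext₁ y r ∈ B) (not_lt.1 hy)
    simp only [Fintype.card_fun, Fintype.card_bool, Fintype.card_fin, Nat.cast_pow,
      Nat.cast_ofNat] at hS
    linarith
  · have hrB : Ext₁ y r ∉ B := (mem_filter.1 hr).2
    simp only [B, mem_filter, mem_univ, true_and, not_lt] at hrB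
    exact hrB
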